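/- Let S and A be finite nonempty types. Let d_i and d_O be probability mass functions on S × A with state marginals d_i^S and d_O^S, and let d_E be a probability mass function on S. Assume d_i is absolutely continuous with respect to d_O, and that d_i^S(s) > 0 implies d_E(s) > 0. Define c*(s) = d_E(s)/(d_E(s)+d_O^S(s)) and η(s,a) = d_i(s,a)/d_O(s,a) wherever d_O(s,a) > 0. Then −Σ_{s : d_i^S(s)>0} d_i^S(s) · log(d_E(s)/d_O^S(s)) + D_KL(d_i‖d_O) = Σ_{(s,a) : d_O(s,a)>0} d_O(s,a) · η(s,a) · (log η(s,a) − log(c*(s)/(1 − c*(s)))), where terms with η(s,a) = 0 contribute 0. -/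

import Mathlib

/-!
Where `d_O > 0` we have `d_O η = d_i`, and the odds `c*/(1 - c*)` of the discriminator equal
`d_E / d_O^S`; where `d_O = 0` absolute continuity forces `d_i = 0`. So the estimator is termwise
`d_i (log (d_i/d_O) - log (d_E/d_O^S))`, and summing the second part over actions turns it into
the state-marginal term.
-/

/-- Kullback–Leibler divergence between pmfs on a finite type:
sum over points with `p x > 0` of `p x * log (p x / q x)`. -/
noncomputable def KL {X : Type*} [Fintype X] (p q : X → ℝ) : ℝ :=
  ∑ x, if 0 < p x then p x * Real.log (p x / q x) else 0

open Finset Real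

lemma ite_pos_mul_of_nonneg {α : Type*} [MulZeroClass α] [PartialOrder α] [DecidableLT α]
    {x : α} (y : α) (hx : 0 ≤ x) : (if 0 < x then x * y else 0) = x * y := by
  rcases hx.eq_or_lt with rfl | hx
  · simp
  · exact if_pos hx

lemma KL_eq_sum_of_nonneg {X : Type*} [Fintype X] {p : X → ℝ} (q : X → ℝ) (hp : ∀ x, 0 ≤ p x) :
    KL p q = ∑ x, p x * log (p x / q x) :=
  sum_congr rfl fun x _ => ite_pos_mul_of_nonneg _ (hp x)

lemma sum_marginal_mul {S A : Type*} [Fintype S] [Fintype A] (p : S × A → ℝ) (f : S → ℝ) :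
    ∑ s, (∑ a, p (s, a)) * f s = ∑ sa, p sa * f sa.1 := by
  simp only [Fintype.sum_prod_type, sum_mul]

lemma le_sum_marginal {S A : Type*} [Fintype A] {p : S × A → ℝ} (hp : ∀ sa, 0 ≤ p sa)
    (s : S) (a : A) : p (s, a) ≤ ∑ b, p (s, b) :=
  single_le_sum (fun b _ => hp (s, b)) (mem_univ a)

lemma div_add_div_one_sub_div_add {a b : ℝ} (h : a + b ≠ 0) :
    a / (a + b) / (1 - a / (a + b)) = a / b := by
  rw [one_sub_div h, add_sub_cancel_left, div_div_div_cancel_right₀ h]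

lemma estimator_term_eq {p q η r r' : ℝ} (hp : 0 ≤ p) (hq : 0 ≤ q) (habs : q = 0 → p = 0)
    (hη : 0 < q → η = p / q) (hr : 0 < q → r = r') :
    (if 0 < q then (if 0 < η then q * η * (log η - log r) else 0) else 0)
      = p * (log (p / q) - log r') := by
  rcases hq.eq_or_lt with rfl | hq
  · simp [habs rfl]
  rw [if_pos hq, hη hq, hr hq]
  rcases hp.eq_or_lt with rfl | hp
  · simp
  rw [if_pos (div_pos hp hq), mul_div_cancel₀ p hq.ne']

theorem structural_kl_estimator_general
    {S A : Type*} [Fintype S] [Fintype A]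
    (d_i d_O : S × A → ℝ) (d_E : S → ℝ)
    (hdi : ∀ sa, 0 ≤ d_i sa)
    (hdO : ∀ sa, 0 ≤ d_O sa)
    (hdE : ∀ s, 0 ≤ d_E s)
    (diS dOS : S → ℝ)
    (hdiS : ∀ s, diS s = ∑ a, d_i (s, a))
    (hdOS : ∀ s, dOS s = ∑ a, d_O (s, a))
    (habs : ∀ sa, d_O sa = 0 → d_i sa = 0)
    (cstar : S → ℝ)
    (hc : ∀ s, 0 < d_E s + dOS s → cstar s = d_E s / (d_E s + dOS s))
    (η : S × A → ℝ)
    (hη : ∀ sa, 0 < d_O sa → η sa = d_i sa / d_O sa) :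
    -(∑ s, if 0 < diS s then diS s * Real.log (d_E s / dOS s) else 0)
        + KL d_i d_O
      = ∑ sa, if 0 < d_O sa then
          (if 0 < η sa then
            d_O sa * η sa *
              (Real.log (η sa) - Real.log (cstar sa.1 / (1 - cstar sa.1)))
          else 0) else 0 := by
  have hdiS_nonneg s : 0 ≤ diS s := hdiS s ▸ sum_nonneg fun a _ => hdi (s, a)
  have hodds : ∀ sa : S × A, 0 < d_O sa →
      cstar sa.1 / (1 - cstar sa.1) = d_E sa.1 / dOS sa.1 := fun ⟨s, a⟩ hpos => by
    have hdOS_pos : 0 < dOS s := hdOS s ▸ hpos.trans_le (le_sum_marginal hdO s a)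
    have hsum_pos : 0 < d_E s + dOS s := by linarith [hdE s]
    rw [hc s hsum_pos, div_add_div_one_sub_div_add hsum_pos.ne']
  calc _ = -(∑ s, diS s * log (d_E s / dOS s)) + ∑ sa, d_i sa * log (d_i sa / d_O sa) := by
        rw [KL_eq_sum_of_nonneg d_O hdi]
        simp only [ite_pos_mul_of_nonneg _ (hdiS_nonneg _)]
    _ = ∑ sa, d_i sa * (log (d_i sa / d_O sa) - log (d_E sa.1 / dOS sa.1)) := by
        simp only [hdiS, sum_marginal_mul, mul_sub, sum_sub_distrib]
        ring
    _ = _ := sum_congr rfl fun sa _ =>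
        (estimator_term_eq (hdi sa) (hdO sa) (habs sa) (hη sa) (hodds sa)).symm

/-- Corollary 1 of the paper: the relaxed imitation-constraint quantity
`-E_{d_i^S}[log (d_E/d_O^S)] + D_KL(d_i‖d_O)` admits the off-policy estimator
`E_{d_O}[η (log η - log (c*/(1-c*)))]`. -/
theorem structural_kl_estimator
    {S A : Type*} [Fintype S] [Fintype A] [Nonempty S] [Nonempty A]
    (d_i d_O : S × A → ℝ) (d_E : S → ℝ)
    (hdi : ∀ sa, 0 ≤ d_i sa) (hdisum : ∑ sa, d_i sa = 1)
    (hdO : ∀ sa, 0 ≤ d_O sa) (hdOsum : ∑ sa, d_O sa = 1)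
    (hdE : ∀ s, 0 ≤ d_E s) (hdEsum : ∑ s, d_E s = 1)
    (diS dOS : S → ℝ)
    (hdiS : ∀ s, diS s = ∑ a, d_i (s, a))
    (hdOS : ∀ s, dOS s = ∑ a, d_O (s, a))
    (habs : ∀ sa, d_O sa = 0 → d_i sa = 0)
    (habsE : ∀ s, 0 < diS s → 0 < d_E s)
    (cstar : S → ℝ)
    (hc : ∀ s, 0 < d_E s + dOS s → cstar s = d_E s / (d_E s + dOS s))
    (η : S × A → ℝ)
    (hη : ∀ sa, 0 < d_O sa → η sa = d_i sa / d_O sa) :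
    -(∑ s, if 0 < diS s then diS s * Real.log (d_E s / dOS s) else 0)
        + KL d_i d_O
      = ∑ sa, if 0 < d_O sa then
          (if 0 < η sa then
            d_O sa * η sa *
              (Real.log (η sa) - Real.log (cstar sa.1 / (1 - cstar sa.1)))
          else 0) else 0 :=
  structural_kl_estimator_general d_i d_O d_E hdi hdO hdE diS dOS hdiS hdOS habs cstar hc η hη
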